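/- FIFO is a (1 + γ/γ₀)-approximation algorithm for the minimization of the maximum completion time in the Wireless Gathering Problem: for every WGP instance, the schedule produced by FIFO satisfies max_j C_j ≤ (1 + γ/γ₀) · max_j C*_j, where C*_j are the completion times in any feasible schedule. -/

import Mathlib

/-- An instance of the Wireless Gathering Problem. -/
structure WGPInstance (V J : Type*) where
  /-- the communication graph -/
  G : SimpleGraph V
  /-- the sink -/
  s : V
  /-- the interference radius -/
  dI : ℕ
  /-- origins of the packets -/
  o : J → V
  /-- release dates of the packets -/
  r : J → ℕ

namespace WGPInstance

variable {V J : Type*}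

/-- Two calls `(u,v)` and `(u',v')` occurring in the same round interfere if
`d(u',v) ≤ d_I` or `d(u,v') ≤ d_I`. -/
def Interferes (I : WGPInstance V J) (u v u' v' : V) : Prop :=
  I.G.edist u' v ≤ I.dI ∨ I.G.edist u v' ≤ I.dI

/-- A feasible (unit-speed) schedule: `x j t` is the node holding packet `j` at round `t`.
Packets sit at their origin until their release date, move along edges of `G`
(the transition from `x j t` to `x j (t+1)` being a call of round `t`), calls of a round
are pairwise non-interfering and have distinct senders, and every packet reaches the sink. -/
def Feasible (I : WGPInstance V J) (x : J → ℕ → V) : Prop :=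
  (∀ j t, t ≤ I.r j → x j t = I.o j) ∧
  (∀ j t, x j (t + 1) = x j t ∨ I.G.Adj (x j t) (x j (t + 1))) ∧
  (∀ j k t, j ≠ k → x j (t + 1) ≠ x j t → x k (t + 1) ≠ x k t →
    x j t ≠ x k t ∧ ¬ I.Interferes (x j t) (x j (t + 1)) (x k t) (x k (t + 1))) ∧
  (∀ j, ∃ t, x j t = I.s)

/-- The completion time of packet `j`: the first round `t ≥ r_j` with `x j t = s`. -/
noncomputable def completion (I : WGPInstance V J) (x : J → ℕ → V) (j : J) : ℕ :=
  sInf {t | I.r j ≤ t ∧ x j t = I.s}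

/-- The flow time of packet `j`: `F_j = C_j - r_j`. -/
noncomputable def flow (I : WGPInstance V J) (x : J → ℕ → V) (j : J) : ℕ :=
  I.completion x j - I.r j

/-- Packet `j` is available (active) at round `t` if it has been released and
has not yet reached the sink. -/
def Active (I : WGPInstance V J) (x : J → ℕ → V) (j : J) (t : ℕ) : Prop :=
  I.r j ≤ t ∧ x j t ≠ I.s

/-- `x` is a schedule that a Priority Greedy algorithm with priority function `prio`
(lower `prio`-value = higher priority) may produce: packets that reached the sink stay
there; every call moves an active packet one step along a shortest path to the sink;
and an active packet is left in place only if every such shortest-path step would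
interfere with the call of some higher-priority packet of that round. -/
def PriorityGreedy (I : WGPInstance V J) (prio : J → ℕ) (x : J → ℕ → V) : Prop :=
  Function.Injective prio ∧
  (∀ j t, x j t = I.s → x j (t + 1) = I.s) ∧
  (∀ j t, x j (t + 1) ≠ x j t →
    I.Active x j t ∧ I.G.dist (x j (t + 1)) I.s + 1 = I.G.dist (x j t) I.s) ∧
  (∀ j t, I.Active x j t → x j (t + 1) = x j t →
    ∀ v, I.G.Adj (x j t) v → I.G.dist v I.s + 1 = I.G.dist (x j t) I.s →
      ∃ k, prio k < prio j ∧ x k (t + 1) ≠ x k t ∧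
        I.Interferes (x j t) v (x k t) (x k (t + 1)))

/-- FIFO is the Priority Greedy algorithm in which packets with earlier release dates
have higher priority (ties broken arbitrarily). -/
def FIFO (I : WGPInstance V J) (x : J → ℕ → V) : Prop :=
  ∃ prio : J → ℕ, (∀ j k, I.r j < I.r k → prio j < prio k) ∧ I.PriorityGreedy prio x

end WGPInstance

/-!
Every Priority Greedy schedule, in particular FIFO, satisfies `C_max ≤ max_k (r_k + d_k) +
∑_k min(d_k, γ)`, where `d_k` is the distance from `o_k` to the sink. After its last waiting
round a packet travels straight to the sink; while waiting it is blocked by a higher-priority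
packet within distance `d_I + 1`, so it finishes at most `min(d_j, γ)` rounds after that packet,
and following the chain of blockers gives the bound.

Conversely, in any feasible schedule each packet `k` makes `min(γ₀, d_k)` calls that enter the
balls of radius `δ < γ₀` around the sink. Two such calls of different packets in the same round
would be within distance `2γ₀ - 1 ≤ d_I` of each other, so all these calls happen in different
rounds, and `∑_k min(γ₀, d_k) ≤ C*_max`. Together with `max_k (r_k + d_k) ≤ C*_max` and
`γ₀ · min(d, γ) ≤ γ · min(γ₀, d)` this gives `γ₀ · C_max ≤ (γ₀ + γ) · C*_max`.
-/

open Finset SimpleGraph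

namespace SimpleGraph

variable {V : Type*} {G : SimpleGraph V} {u v s : V}

lemma dist_le_of_edist_le {n : ℕ} (h : G.edist u v ≤ n) : G.dist u v ≤ n :=
  ENat.toNat_le_of_le_natCast h

lemma dist_le_dist_add_one_of_eq_or_adj (h : v = u ∨ G.Adj u v) :
    G.dist u s ≤ G.dist v s + 1 := by
  rcases h with rfl | h
  · omega
  · rw [dist_comm, dist_comm (u := v)]
    rcases h.diff_dist_adj (u := s) with h' | h' | h' <;> omega

lemma Reachable.exists_adj_dist_add_one_eq (hr : G.Reachable u s) (hne : u ≠ s) :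
    ∃ v, G.Adj u v ∧ G.dist v s + 1 = G.dist u s := by
  obtain ⟨p, hp⟩ := hr.exists_walk_length_eq_dist
  cases p with
  | nil => exact absurd rfl hne
  | cons h q =>
    refine ⟨_, h, le_antisymm ?_ (dist_le_dist_add_one_of_eq_or_adj (.inr h)).ge⟩
    have := dist_le q
    rw [Walk.length_cons] at hp
    omega

section Trajectory

variable {p : ℕ → V}

lemma reachable_of_eq_or_adj (hstep : ∀ t, p (t + 1) = p t ∨ G.Adj (p t) (p (t + 1)))
    (a b : ℕ) : G.Reachable (p a) (p b) := by
  have hcomp : ∀ t, G.connectedComponentMk (p t) = G.connectedComponentMk (p 0) := by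
    intro t
    induction t with
    | zero => rfl
    | succ t ih =>
      rw [← ih, ConnectedComponent.eq]
      rcases hstep t with h | h
      · rw [h]
      · exact h.reachable.symm
  exact ConnectedComponent.exact ((hcomp a).trans (hcomp b).symm)

lemma dist_le_dist_add_of_eq_or_adj (hstep : ∀ t, p (t + 1) = p t ∨ G.Adj (p t) (p (t + 1)))
    (s : V) (a n : ℕ) : G.dist (p a) s ≤ G.dist (p (a + n)) s + n := by
  induction n with
  | zero => simp
  | succ n ih =>
    have := dist_le_dist_add_one_of_eq_or_adj (s := s) (hstep (a + n))
    rw [← add_assoc a n 1]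
    omega

end Trajectory

end SimpleGraph

lemma Nat.mul_min_le_mul_min {a b : ℕ} (hab : a ≤ b) (d : ℕ) : a * min d b ≤ b * min a d := by
  rcases le_total a d with h | h
  · rw [min_eq_left h, mul_comm b]
    exact Nat.mul_le_mul_left a (min_le_right d b)
  · rw [min_eq_left (h.trans hab), min_eq_right h]
    exact Nat.mul_le_mul_right d hab

namespace WGPInstance

variable {V J : Type*} {I : WGPInstance V J} {x : J → ℕ → V} {prio : J → ℕ}

lemma Interferes.dist_le {u v u' v' : V} (h : I.Interferes u v u' v') (huv : I.G.Adj u v)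
    (hu'v' : I.G.Adj u' v') : I.G.dist u u' ≤ I.dI + 1 := by
  apply dist_le_of_edist_le
  push_cast
  rcases h with h | h
  · calc I.G.edist u u' ≤ I.G.edist u v + I.G.edist v u' := SimpleGraph.edist_triangle
      _ ≤ 1 + I.dI := by
          gcongr
          · exact (edist_eq_one_iff_adj.mpr huv).le
          · rwa [edist_comm]
      _ = I.dI + 1 := add_comm _ _
  · calc I.G.edist u u' ≤ I.G.edist u v' + I.G.edist v' u' := SimpleGraph.edist_triangle
      _ ≤ I.dI + 1 := by
          gcongr
          exact (edist_eq_one_iff_adj.mpr hu'v'.symm).le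

lemma completion_le {j : J} {t : ℕ} (hr : I.r j ≤ t) (hs : x j t = I.s) :
    I.completion x j ≤ t :=
  Nat.sInf_le ⟨hr, hs⟩

lemma Feasible.reachable_sink (hx : I.Feasible x) (j : J) (t : ℕ) :
    I.G.Reachable (x j t) I.s := by
  obtain ⟨t₀, ht₀⟩ := hx.2.2.2 j
  simpa [ht₀] using reachable_of_eq_or_adj (hx.2.1 j) t t₀

lemma Feasible.completion_spec (hx : I.Feasible x) (j : J) :
    I.r j ≤ I.completion x j ∧ x j (I.completion x j) = I.s := by
  suffices h : {t | I.r j ≤ t ∧ x j t = I.s}.Nonempty from Nat.sInf_mem h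
  obtain ⟨t₀, ht₀⟩ := hx.2.2.2 j
  rcases le_total (I.r j) t₀ with h | h
  · exact ⟨t₀, h, ht₀⟩
  · exact ⟨I.r j, le_rfl, by rw [hx.1 j _ le_rfl, ← hx.1 j t₀ h, ht₀]⟩

lemma Feasible.dist_add_le_completion (hx : I.Feasible x) {j : J} {t : ℕ}
    (ht : t ≤ I.completion x j) : I.G.dist (x j t) I.s + t ≤ I.completion x j := by
  have h := dist_le_dist_add_of_eq_or_adj (hx.2.1 j) I.s t (I.completion x j - t)
  rw [Nat.add_sub_cancel' ht, (hx.completion_spec j).2, dist_self] at h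
  omega

lemma Feasible.release_add_dist_le_completion (hx : I.Feasible x) (j : J) :
    I.r j + I.G.dist (I.o j) I.s ≤ I.completion x j := by
  have h := hx.dist_add_le_completion (hx.completion_spec j).1
  rwa [hx.1 j _ le_rfl, add_comm] at h

namespace PriorityGreedy

lemma lt_completion_of_ne (hpg : I.PriorityGreedy prio x) (hx : I.Feasible x) {j : J} {t : ℕ}
    (hmv : x j (t + 1) ≠ x j t) : t < I.completion x j := by
  by_contra! h
  obtain ⟨n, rfl⟩ := Nat.exists_eq_add_of_le h
  have hsink : ∀ n, x j (I.completion x j + n) = I.s := by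
    intro n
    induction n with
    | zero => exact (hx.completion_spec j).2
    | succ n ih => exact hpg.2.1 j _ ih
  exact (hpg.2.2.1 j _ hmv).1.2 (hsink n)

lemma dist_le_dist_origin (hpg : I.PriorityGreedy prio x) (hx : I.Feasible x) (j : J)
    (t : ℕ) : I.G.dist (x j t) I.s ≤ I.G.dist (I.o j) I.s := by
  induction t with
  | zero => rw [hx.1 j 0 (Nat.zero_le _)]
  | succ t ih =>
    by_cases h : x j (t + 1) = x j t
    · rwa [h]
    · have := (hpg.2.2.1 j t h).2
      omega

lemma completion_le_or_exists_wait (hpg : I.PriorityGreedy prio x) (hx : I.Feasible x)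
    (j : J) :
    I.completion x j ≤ I.r j + I.G.dist (I.o j) I.s ∨
      ∃ t, I.Active x j t ∧ x j (t + 1) = x j t ∧
        I.completion x j ≤ t + 1 + I.G.dist (x j t) I.s := by
  -- the round before the first round `a ≥ r j` with `C_j ≤ a + d(x j a, s)` is a waiting round
  have hQ : ∃ n, I.completion x j ≤ I.r j + n + I.G.dist (x j (I.r j + n)) I.s :=
    ⟨I.completion x j, by omega⟩
  have hspec := Nat.find_spec hQ
  rcases hn : Nat.find hQ with _ | n
  · left
    rwa [hn, add_zero, hx.1 j _ le_rfl] at hspec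
  · right
    have hmin := Nat.find_min hQ (m := n) (by omega)
    rw [hn, ← add_assoc] at hspec
    have hwait : x j (I.r j + n + 1) = x j (I.r j + n) := by
      by_contra hmv
      have := (hpg.2.2.1 j _ hmv).2
      exact hmin (by omega)
    refine ⟨I.r j + n, ⟨by omega, fun hs => hmin ?_⟩, hwait, by rwa [hwait] at hspec⟩
    have := completion_le (Nat.le_add_right (I.r j) n) hs
    omega

lemma exists_blocker (hpg : I.PriorityGreedy prio x) (hx : I.Feasible x) {j : J} {t : ℕ}
    (hact : I.Active x j t) (hwait : x j (t + 1) = x j t) :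
    ∃ k, prio k < prio j ∧ x k (t + 1) ≠ x k t ∧ I.G.dist (x j t) (x k t) ≤ I.dI + 1 := by
  obtain ⟨v, hadj, hdist⟩ := (hx.reachable_sink j t).exists_adj_dist_add_one_eq hact.2
  obtain ⟨k, hprio, hmv, hint⟩ := hpg.2.2.2 j t hact hwait v hadj hdist
  exact ⟨k, hprio, hmv, hint.dist_le hadj ((hx.2.1 k t).resolve_left hmv)⟩

lemma completion_le_or_exists_higher (hpg : I.PriorityGreedy prio x) (hx : I.Feasible x)
    (j : J) :
    I.completion x j ≤ I.r j + I.G.dist (I.o j) I.s ∨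
      ∃ k, prio k < prio j ∧
        I.completion x j ≤ I.completion x k + min (I.G.dist (I.o j) I.s) (I.dI + 2) := by
  refine (hpg.completion_le_or_exists_wait hx j).imp_right ?_
  rintro ⟨t, hact, hwait, hC⟩
  obtain ⟨k, hprio, hmv, hjk⟩ := hpg.exists_blocker hx hact hwait
  have htk := hpg.lt_completion_of_ne hx hmv
  have hCk := hx.dist_add_le_completion htk.le
  have htri := (hx.reachable_sink k t).dist_triangle_right (x j t)
  have horigin := hpg.dist_le_dist_origin hx j t
  exact ⟨k, hprio, by omega⟩

lemma completion_le_sup_add_sum [Fintype J] (hpg : I.PriorityGreedy prio x)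
    (hx : I.Feasible x) (j : J) :
    I.completion x j ≤ univ.sup (fun k => I.r k + I.G.dist (I.o k) I.s) +
      ∑ k with prio k ≤ prio j, min (I.G.dist (I.o k) I.s) (I.dI + 2) := by
  classical
  set M := univ.sup (fun k => I.r k + I.G.dist (I.o k) I.s)
  set f := fun k => min (I.G.dist (I.o k) I.s) (I.dI + 2)
  induction j using (wellFounded_lt.onFun (f := prio)).induction with
  | h j ih =>
    rcases hpg.completion_le_or_exists_higher hx j with h | ⟨k, hprio, hC⟩
    · exact h.trans (le_add_right (le_sup (f := fun k => I.r k + I.G.dist (I.o k) I.s)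
        (mem_univ j)))
    · have hj : j ∉ ({k' | prio k' ≤ prio k} : Finset J) := by simpa using hprio
      have hsub : insert j ({k' | prio k' ≤ prio k} : Finset J) ⊆
          ({k' | prio k' ≤ prio j} : Finset J) := by
        intro a
        simp only [mem_insert, mem_filter, mem_univ, true_and]
        rintro (rfl | ha) <;> omega
      calc I.completion x j ≤ I.completion x k + f j := hC
        _ ≤ M + ∑ k' with prio k' ≤ prio k, f k' + f j := by gcongr; exact ih k hprio
        _ = M + ∑ k' ∈ insert j ({k' | prio k' ≤ prio k} : Finset J), f k' := by
            rw [sum_insert hj]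
            ring
        _ ≤ M + ∑ k' with prio k' ≤ prio j, f k' := by gcongr

lemma sup_completion_le [Fintype J] (hpg : I.PriorityGreedy prio x) (hx : I.Feasible x) :
    univ.sup (I.completion x) ≤ univ.sup (fun k => I.r k + I.G.dist (I.o k) I.s) +
      ∑ k, min (I.G.dist (I.o k) I.s) (I.dI + 2) :=
  Finset.sup_le fun j _ => (hpg.completion_le_sup_add_sum hx j).trans
    (by gcongr; exact filter_subset _ _)

end PriorityGreedy

noncomputable def entryRound (I : WGPInstance V J) (y : J → ℕ → V) (k : J) (δ : ℕ) : ℕ :=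
  sInf {t | I.G.dist (y k (t + 1)) I.s ≤ δ}

variable {y : J → ℕ → V}

lemma Feasible.dist_entryRound (hy : I.Feasible y) {k : J} {δ : ℕ}
    (hδ : δ < I.G.dist (I.o k) I.s) :
    I.G.dist (y k (I.entryRound y k δ)) I.s = δ + 1 ∧
      I.G.dist (y k (I.entryRound y k δ + 1)) I.s = δ ∧
      I.entryRound y k δ < I.completion y k := by
  have hCk := hy.release_add_dist_le_completion k
  have hlast : I.completion y k - 1 ∈ {t | I.G.dist (y k (t + 1)) I.s ≤ δ} := by
    rw [Set.mem_ofPred_eq, Nat.sub_add_cancel (by omega), (hy.completion_spec k).2, dist_self]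
    exact Nat.zero_le δ
  have hafter : I.G.dist (y k (I.entryRound y k δ + 1)) I.s ≤ δ := Nat.sInf_mem ⟨_, hlast⟩
  have hτC : I.entryRound y k δ ≤ I.completion y k - 1 := Nat.sInf_le hlast
  have hbefore : δ < I.G.dist (y k (I.entryRound y k δ)) I.s := by
    rcases hτ : I.entryRound y k δ with _ | u
    · rwa [hy.1 k 0 (Nat.zero_le _)]
    · have := Nat.notMem_of_lt_sInf (s := {t | I.G.dist (y k (t + 1)) I.s ≤ δ})
        (show u < I.entryRound y k δ by omega)
      simpa using this
  have hstep := dist_le_dist_add_one_of_eq_or_adj (s := I.s) (hy.2.1 k (I.entryRound y k δ))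
  omega

lemma Feasible.entryRound_injOn (hy : I.Feasible y) :
    Set.InjOn (fun p : (_ : J) × ℕ => I.entryRound y p.1 p.2)
      {p | p.2 < min ((I.dI + 1) / 2) (I.G.dist (I.o p.1) I.s)} := by
  rintro ⟨k, δ⟩ hk ⟨k', δ'⟩ hk' (heq : I.entryRound y k δ = I.entryRound y k' δ')
  simp only [Set.mem_ofPred_eq, lt_min_iff] at hk hk'
  obtain ⟨hd, hd1, -⟩ := hy.dist_entryRound hk.2
  obtain ⟨hd', hd1', -⟩ := hy.dist_entryRound hk'.2
  rw [heq] at hd hd1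
  set t := I.entryRound y k' δ'
  by_cases hkk : k = k'
  · subst hkk
    obtain rfl : δ = δ' := by omega
    rfl
  -- otherwise both packets call in round `t` and the calls interfere
  have hmv : y k (t + 1) ≠ y k t := fun h => by rw [h] at hd1; omega
  have hmv' : y k' (t + 1) ≠ y k' t := fun h => by rw [h] at hd1'; omega
  refine absurd (Or.inl ?_) (hy.2.2.1 k k' t hkk hmv hmv').2
  have hreach := (hy.reachable_sink k' t).trans (hy.reachable_sink k (t + 1)).symm
  have htri := (hy.reachable_sink k (t + 1)).symm.dist_triangle_right (y k' t)
  rw [dist_comm (u := I.s)] at htri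
  rw [← hreach.coe_dist_eq_edist]
  exact_mod_cast (show I.G.dist (y k' t) (y k (t + 1)) ≤ I.dI by omega)

lemma Feasible.sum_min_le_sup_completion [Fintype J] (hy : I.Feasible y) :
    ∑ k, min ((I.dI + 1) / 2) (I.G.dist (I.o k) I.s) ≤ univ.sup (I.completion y) := by
  set S := univ.sigma fun k => range (min ((I.dI + 1) / 2) (I.G.dist (I.o k) I.s))
  have hmaps : Set.MapsTo (fun p : (_ : J) × ℕ => I.entryRound y p.1 p.2) S
      (range (univ.sup (I.completion y))) := by
    rintro ⟨k, δ⟩ hp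
    simp only [S, coe_sigma, Set.mem_sigma_iff, mem_coe, mem_univ, mem_range, lt_min_iff,
      true_and] at hp ⊢
    exact (hy.dist_entryRound hp.2).2.2.trans_le (le_sup (mem_univ k))
  have hcard := card_le_card_of_injOn _ hmaps fun p hp q hq =>
    hy.entryRound_injOn (by simpa [S] using hp) (by simpa [S] using hq)
  simpa [S, card_sigma] using hcard

lemma PriorityGreedy.mul_sup_completion_le [Fintype J] (hpg : I.PriorityGreedy prio x)
    (hx : I.Feasible x) (hy : I.Feasible y) :
    (I.dI + 1) / 2 * univ.sup (I.completion x) ≤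
      ((I.dI + 1) / 2 + (I.dI + 2)) * univ.sup (I.completion y) := by
  have hupper := hpg.sup_completion_le hx
  have hrelease : univ.sup (fun k => I.r k + I.G.dist (I.o k) I.s) ≤ univ.sup (I.completion y) :=
    sup_mono_fun fun k _ => hy.release_add_dist_le_completion k
  have hcritical := hy.sum_min_le_sup_completion
  have hcompare : (I.dI + 1) / 2 * ∑ k, min (I.G.dist (I.o k) I.s) (I.dI + 2) ≤
      (I.dI + 2) * ∑ k, min ((I.dI + 1) / 2) (I.G.dist (I.o k) I.s) := by
    rw [mul_sum, mul_sum]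
    exact sum_le_sum fun k _ => Nat.mul_min_le_mul_min (by omega) _
  linarith [Nat.mul_le_mul_left ((I.dI + 1) / 2) hupper,
    Nat.mul_le_mul_left ((I.dI + 1) / 2) hrelease, Nat.mul_le_mul_left (I.dI + 2) hcritical]

end WGPInstance

open WGPInstance in
/-- FIFO is a `(1 + γ/γ₀)`-approximation for the minimization of the maximum completion
time in the Wireless Gathering Problem: for every WGP instance, every schedule `x`
produced by FIFO and every feasible schedule `y` (with completion times `C*`),
`max_j C_j ≤ (1 + γ/γ₀) · max_j C*_j`, where `γ = d_I + 2` and `γ₀ = ⌊(d_I+1)/2⌋`. -/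
theorem fifo_approx {V J : Type*} [Fintype J]
    (I : WGPInstance V J) (hdI : 1 ≤ I.dI)
    (x : J → ℕ → V) (hx : I.Feasible x) (hfifo : I.FIFO x)
    (y : J → ℕ → V) (hy : I.Feasible y) :
    ((Finset.univ.sup (I.completion x) : ℕ) : ℚ) ≤
      (1 + (I.dI + 2 : ℚ) / ((I.dI + 1) / 2 : ℕ)) *
        ((Finset.univ.sup (I.completion y) : ℕ) : ℚ) := by
  obtain ⟨prio, -, hpg⟩ := hfifo
  have hnat := hpg.mul_sup_completion_le hx hy
  have hγ₀ : (0 : ℚ) < ((I.dI + 1) / 2 : ℕ) := by exact_mod_cast (by omega : 0 < (I.dI + 1) / 2)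
  rw [← mul_le_mul_iff_right₀ hγ₀]
  calc (((I.dI + 1) / 2 : ℕ) : ℚ) * (univ.sup (I.completion x) : ℕ)
      ≤ (((I.dI + 1) / 2 : ℕ) + (I.dI + 2 : ℚ)) * (univ.sup (I.completion y) : ℕ) := by
        exact_mod_cast hnat
    _ = ((I.dI + 1) / 2 : ℕ) * ((1 + (I.dI + 2 : ℚ) / ((I.dI + 1) / 2 : ℕ)) *
          (univ.sup (I.completion y) : ℕ)) := by
        field_simp
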